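/- arXiv:2012.14848 — 6 statements merged into one kernel-verified Lean document; each statement's English description precedes it below -/
import Mathlib

section
/- Let T1 be a real m1×n matrix, T2 a real m2×n matrix, τ1 ∈ ℝ^{m1} and τ2 ∈ ℝ^{m2}, and suppose the polyhedra X1 := {x ∈ ℝⁿ : T1 x ≤ τ1} and X2 := {x ∈ ℝⁿ : T2 x ≤ τ2} are both nonempty. Then X1 ⊆ X2 holds if and only if there exists a nonnegative real m2×m1 matrix P such that P T1 = T2 and P τ1 ≤ τ2. -/
/-!
Containment `X1 ⊆ X2` says that every inequality `T2 i ⬝ᵥ x ≤ τ2 i` is implied by the system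
`T1 x ≤ τ1`. By the affine Farkas lemma such an implied inequality is a
nonnegative combination of the rows of the system with a weakened right-hand side, and these
combinations are the rows of `P`.

The affine Farkas lemma follows from the conic one by homogenisation: `(c, d)` lies in the cone
generated by the `(A i, b i)` and `(0, 1)`, since otherwise a separating functional yields either a
point of `{x | A x ≤ b}` or a recession direction of it along which `c ⬝ᵥ x` exceeds `d`.
Separation needs the finitely generated cone to be closed: by the conic Carathéodory argument it is
a finite union of cones with linearly independent generators, i.e. of closed images of orthants.
-/

open Set Matrix

theorem exists_sub_smul_nonneg_and_eq_zero {ι : Type*} [Fintype ι] {c μ : ι → ℝ} (hc : 0 ≤ c)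
    (hμ : ∃ i, 0 < μ i) : ∃ t : ℝ, ∃ i₀, 0 ≤ c - t • μ ∧ (c - t • μ) i₀ = 0 := by
  classical
  obtain ⟨i₀, hi₀, hmin⟩ := (Finset.univ.filter fun i => 0 < μ i).exists_min_image
    (fun i => c i / μ i) (by simpa [Finset.Nonempty] using hμ)
  rw [Finset.mem_filter] at hi₀
  refine ⟨c i₀ / μ i₀, i₀, fun i => ?_, by simp [div_mul_cancel₀ _ hi₀.2.ne']⟩
  simp only [Pi.zero_apply, Pi.sub_apply, Pi.smul_apply, smul_eq_mul, sub_nonneg]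
  rcases lt_or_ge 0 (μ i) with hμi | hμi
  · exact (le_div_iff₀ hμi).1 (hmin i (by simpa using hμi))
  · exact (mul_nonpos_of_nonneg_of_nonpos (div_nonneg (hc i₀) hi₀.2.le) hμi).trans (hc i)

namespace PointedCone

variable {E : Type*} [AddCommGroup E] [Module ℝ E]

theorem mem_hull_range_iff {ι : Type*} [Fintype ι] {v : ι → E} {x : E} :
    x ∈ hull ℝ (range v) ↔ ∃ c : ι → ℝ, 0 ≤ c ∧ ∑ i, c i • v i = x := by
  rw [hull, Submodule.mem_span_range_iff_exists_fun]
  constructor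
  · rintro ⟨c, rfl⟩
    exact ⟨fun i => c i, fun i => (c i).2, rfl⟩
  · rintro ⟨c, hc, rfl⟩
    exact ⟨fun i => ⟨c i, hc i⟩, rfl⟩

theorem exists_mem_hull_range_succAbove {k : ℕ} {v : Fin (k + 1) → E}
    (hv : ¬ LinearIndependent ℝ v) {x : E} (hx : x ∈ hull ℝ (range v)) :
    ∃ i : Fin (k + 1), x ∈ hull ℝ (range (v ∘ i.succAbove)) := by
  obtain ⟨c, hc, rfl⟩ := mem_hull_range_iff.1 hx
  obtain ⟨μ, hμv, hμ⟩ : ∃ μ : Fin (k + 1) → ℝ, ∑ i, μ i • v i = 0 ∧ ∃ i, 0 < μ i := by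
    obtain ⟨g, hg, i, hi⟩ := Fintype.not_linearIndependent_iff.1 hv
    rcases hi.lt_or_gt with hi | hi
    · exact ⟨-g, by simpa using hg, i, by simpa using hi⟩
    · exact ⟨g, hg, i, hi⟩
  obtain ⟨t, i₀, hc', hi₀⟩ := exists_sub_smul_nonneg_and_eq_zero hc hμ
  have hsum : ∑ i, (c - t • μ) i • v i = ∑ i, c i • v i := by
    simp [sub_smul, Finset.sum_sub_distrib, mul_smul, ← Finset.smul_sum, hμv]
  refine ⟨i₀, mem_hull_range_iff.2 ⟨fun j => (c - t • μ) (i₀.succAbove j), fun j => hc' _, ?_⟩⟩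
  rw [← hsum, Fin.sum_univ_succAbove _ i₀, hi₀, zero_smul, zero_add]
  rfl

variable [TopologicalSpace E] [IsTopologicalAddGroup E] [ContinuousSMul ℝ E] [T2Space E]

theorem isClosed_hull_range_of_linearIndependent {ι : Type*} [Fintype ι] {v : ι → E}
    (hv : LinearIndependent ℝ v) : IsClosed (hull ℝ (range v) : Set E) := by
  have hL := (Fintype.linearCombination ℝ v).isClosedEmbedding_of_injective
    (LinearMap.ker_eq_bot.2 hv.fintypeLinearCombination_injective)
  convert hL.isClosedMap _ (isClosed_Ici (a := (0 : ι → ℝ))) using 1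
  ext x
  simp [mem_hull_range_iff, Fintype.linearCombination_apply]

theorem isClosed_hull_range_fin : ∀ {k : ℕ} (v : Fin k → E), IsClosed (hull ℝ (range v) : Set E)
  | 0, v => by simp [range_eq_empty]
  | k + 1, v => by
    by_cases hv : LinearIndependent ℝ v
    · exact isClosed_hull_range_of_linearIndependent hv
    · have : (hull ℝ (range v) : Set E) = ⋃ i : Fin (k + 1), hull ℝ (range (v ∘ i.succAbove)) :=
        Subset.antisymm (fun x hx => mem_iUnion.2 (exists_mem_hull_range_succAbove hv hx))
          (iUnion_subset fun i => Submodule.span_mono (range_comp_subset_range _ _))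
      rw [this]
      exact isClosed_iUnion_of_finite fun i => isClosed_hull_range_fin _

theorem isClosed_hull_range {ι : Type*} [Finite ι] (v : ι → E) :
    IsClosed (hull ℝ (range v) : Set E) := by
  obtain ⟨k, ⟨e⟩⟩ := Finite.exists_equiv_fin ι
  rw [← EquivLike.range_comp v e.symm]
  exact isClosed_hull_range_fin _

theorem exists_strongDual_nonneg_of_notMem_hull_range [LocallyConvexSpace ℝ E] {ι : Type*}
    [Finite ι] (v : ι → E) {x : E} (hx : x ∉ hull ℝ (range v)) :
    ∃ f : StrongDual ℝ E, (∀ i, 0 ≤ f (v i)) ∧ f x < 0 := by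
  obtain ⟨f, hf, hfx⟩ :=
    ProperCone.hyperplane_separation_point ⟨hull ℝ (range v), isClosed_hull_range v⟩ hx
  exact ⟨f, fun i => hf _ (subset_hull (mem_range_self i)), hfx⟩

end PointedCone

theorem LinearMap.exists_apply_prod_eq {n : Type*} [Fintype n] [DecidableEq n]
    (f : (n → ℝ) × ℝ →ₗ[ℝ] ℝ) : ∃ (u : n → ℝ) (s : ℝ), ∀ x t, f (x, t) = u ⬝ᵥ x + t * s := by
  refine ⟨(dotProductEquiv ℝ n).symm (f ∘ₗ LinearMap.inl ℝ _ _), f (0, 1), fun x t => ?_⟩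
  have hx : (dotProductEquiv ℝ n).symm (f ∘ₗ LinearMap.inl ℝ _ _) ⬝ᵥ x = f (x, 0) :=
    LinearMap.congr_fun ((dotProductEquiv ℝ n).apply_symm_apply _) x
  rw [hx, ← smul_eq_mul, ← map_smul, ← map_add]
  simp

namespace Matrix

variable {m n : Type*} [Fintype n] {A : Matrix m n ℝ} {b : m → ℝ} {c : n → ℝ} {d : ℝ}

theorem dotProduct_le_mul_of_mulVec_le_smul (hne : ∃ x, A *ᵥ x ≤ b)
    (h : ∀ x, A *ᵥ x ≤ b → c ⬝ᵥ x ≤ d) {u : n → ℝ} {s : ℝ} (hs : 0 ≤ s)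
    (hu : A *ᵥ u ≤ s • b) : c ⬝ᵥ u ≤ s * d := by
  rcases hs.lt_or_eq with hs | rfl
  · have := h (s⁻¹ • u) (by
      rw [mulVec_smul]
      exact (smul_le_smul_of_nonneg_left hu (inv_nonneg.2 hs.le)).trans_eq
        (inv_smul_smul₀ hs.ne' b))
    rw [dotProduct_smul, smul_eq_mul, inv_mul_le_iff₀ hs] at this
    exact this
  · -- `u` is a recession direction of the nonempty polyhedron `{x | A *ᵥ x ≤ b}`
    obtain ⟨x₀, hx₀⟩ := hne
    have hray : ∀ r : ℝ, 0 ≤ r → c ⬝ᵥ x₀ + r * c ⬝ᵥ u ≤ d := fun r hr => by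
      have := h (x₀ + r • u) (by
        rw [mulVec_add, mulVec_smul, ← add_zero b]
        exact add_le_add hx₀ (smul_nonpos_of_nonneg_of_nonpos hr (by simpa using hu)))
      simpa [dotProduct_add] using this
    by_contra! hcu
    have := hray ((d - c ⬝ᵥ x₀ + 1) / c ⬝ᵥ u)
      (div_nonneg (by linarith [hray 0 le_rfl]) (by simpa using hcu.le))
    rw [zero_mul] at hcu
    rw [div_mul_cancel₀ _ hcu.ne'] at this
    linarith

variable [Fintype m] (A b c d) in
theorem exists_nonneg_vecMul_eq_of_mulVec_le_imp (hne : ∃ x, A *ᵥ x ≤ b)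
    (h : ∀ x, A *ᵥ x ≤ b → c ⬝ᵥ x ≤ d) : ∃ y : m → ℝ, 0 ≤ y ∧ y ᵥ* A = c ∧ y ⬝ᵥ b ≤ d := by
  classical
  let g : Option m → (n → ℝ) × ℝ := fun o => o.elim (0, 1) fun i => (A i, b i)
  have hcd : (c, d) ∈ PointedCone.hull ℝ (range g) := by
    by_contra hcd
    obtain ⟨f, hfg, hfcd⟩ := PointedCone.exists_strongDual_nonneg_of_notMem_hull_range g hcd
    obtain ⟨u, s, hf⟩ := LinearMap.exists_apply_prod_eq f.toLinearMap
    replace hf : ∀ x t, f (x, t) = u ⬝ᵥ x + t * s := hf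
    have hs : 0 ≤ s := by simpa [g, hf] using hfg none
    have hAu : A *ᵥ -u ≤ s • b := fun i => by
      have := hfg (some i)
      simp only [g, Option.elim_some, hf] at this
      change A i ⬝ᵥ -u ≤ s * b i
      rw [dotProduct_neg, dotProduct_comm]
      linarith
    have := dotProduct_le_mul_of_mulVec_le_smul hne h hs hAu
    rw [hf, dotProduct_comm] at hfcd
    rw [dotProduct_neg] at this
    linarith
  obtain ⟨y, hy, hyg⟩ := PointedCone.mem_hull_range_iff.1 hcd
  simp only [Fintype.sum_option, g, Option.elim_none, Option.elim_some, Prod.smul_mk] at hyg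
  have hc := congrArg Prod.fst hyg
  have hd := congrArg Prod.snd hyg
  simp only [Prod.fst_add, Prod.fst_sum, smul_zero, zero_add] at hc
  simp only [Prod.snd_add, Prod.snd_sum, smul_eq_mul, mul_one] at hd
  refine ⟨fun i => y (some i), fun i => hy _, by rw [vecMul_eq_sum, hc], ?_⟩
  exact hd ▸ le_add_of_nonneg_left (hy none)

end Matrix

theorem farkas_polytope_containment_general {n m1 m2 : ℕ}
    (T1 : Matrix (Fin m1) (Fin n) ℝ) (T2 : Matrix (Fin m2) (Fin n) ℝ)
    (τ1 : Fin m1 → ℝ) (τ2 : Fin m2 → ℝ)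
    (h1 : {x : Fin n → ℝ | T1.mulVec x ≤ τ1}.Nonempty) :
    {x : Fin n → ℝ | T1.mulVec x ≤ τ1} ⊆ {x : Fin n → ℝ | T2.mulVec x ≤ τ2} ↔
      ∃ P : Matrix (Fin m2) (Fin m1) ℝ,
        (∀ i j, 0 ≤ P i j) ∧ P * T1 = T2 ∧ P.mulVec τ1 ≤ τ2 := by
  constructor
  · intro hsub
    choose y hy hyT1 hyτ1 using fun i =>
      exists_nonneg_vecMul_eq_of_mulVec_le_imp T1 τ1 (T2 i) (τ2 i) h1 fun x hx => hsub hx i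
    exact ⟨Matrix.of y, hy, by ext i j; exact congrFun (hyT1 i) j, hyτ1⟩
  · rintro ⟨P, hP, rfl, hPτ⟩ x hx
    calc (P * T1) *ᵥ x = P *ᵥ (T1 *ᵥ x) := (mulVec_mulVec _ _ _).symm
      _ ≤ P *ᵥ τ1 := fun i => dotProduct_le_dotProduct_of_nonneg_left hx (hP i)
      _ ≤ τ2 := hPτ

/-- Extended Farkas lemma for polytope containment: for nonempty polyhedra
`X1 = {x : T1 x ≤ τ1}` and `X2 = {x : T2 x ≤ τ2}`, containment `X1 ⊆ X2` holds
iff there is a nonnegative matrix `P` with `P T1 = T2` and `P τ1 ≤ τ2`. -/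
theorem farkas_polytope_containment {n m1 m2 : ℕ}
    (T1 : Matrix (Fin m1) (Fin n) ℝ) (T2 : Matrix (Fin m2) (Fin n) ℝ)
    (τ1 : Fin m1 → ℝ) (τ2 : Fin m2 → ℝ)
    (h1 : {x : Fin n → ℝ | T1.mulVec x ≤ τ1}.Nonempty)
    (h2 : {x : Fin n → ℝ | T2.mulVec x ≤ τ2}.Nonempty) :
    {x : Fin n → ℝ | T1.mulVec x ≤ τ1} ⊆ {x : Fin n → ℝ | T2.mulVec x ≤ τ2} ↔
      ∃ P : Matrix (Fin m2) (Fin m1) ℝ,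
        (∀ i j, 0 ≤ P i j) ∧ P * T1 = T2 ∧ P.mulVec τ1 ≤ τ2 :=
  farkas_polytope_containment_general T1 T2 τ1 τ2 h1
end

section
/- Let T be a real m×n matrix, M a real n×n matrix, and λ ≥ 0 a real number. Suppose that for every z ∈ ℝⁿ with T z ≤ 𝟏 one has T M z ≤ λ𝟏 (i.e. the set Λ = {z : T z ≤ 𝟏} is mapped by M into its λ-scaling). Then there exists a nonnegative real m×m matrix P such that P T = T M and P 𝟏 ≤ λ 𝟏. -/
/-!
Each row of `P` is a Farkas certificate: for a fixed `i`, the linear program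
`maximize (T M z)ᵢ subject to T z ≤ 𝟏` is feasible (at `z = 0`) with value at most `λ`, so by the
affine Farkas lemma there is `p ≥ 0` with `pᵀ T = (T M)ᵢ` and `p ⬝ 𝟏 ≤ λ`. The affine lemma is
reduced to the homogeneous one by homogenizing `z ↦ (w, t)`, and the homogeneous Farkas lemma is
proved by Fourier–Motzkin elimination of one generator at a time.
-/

open Matrix

namespace Matrix

section CommRing

variable {R ι d : Type*} [CommRing R] [Fintype d]

theorem sub_vecMulVec_mulVec [Fintype ι] (X : Matrix ι d R) (a w z : d → R) :
    (X - vecMulVec (X *ᵥ w) a) *ᵥ z = X *ᵥ (z - (a ⬝ᵥ z) • w) := by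
  rw [sub_mulVec, vecMulVec_mulVec, op_smul_eq_smul, mulVec_sub, mulVec_smul]

theorem sub_smul_dotProduct (b a w z : d → R) :
    (b - (b ⬝ᵥ w) • a) ⬝ᵥ z = b ⬝ᵥ (z - (a ⬝ᵥ z) • w) := by
  simp only [sub_dotProduct, dotProduct_sub, smul_dotProduct, dotProduct_smul, smul_eq_mul]
  ring

theorem cons_mulVec_nonpos_iff [Preorder R] {k : ℕ} (a : d → R) (V : Fin k → d → R)
    (z : d → R) : of (vecCons a V) *ᵥ z ≤ 0 ↔ a ⬝ᵥ z ≤ 0 ∧ of V *ᵥ z ≤ 0 := by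
  rw [cons_mulVec]
  exact Fin.cons_le

end CommRing

variable {𝕜 ι d : Type*} [Field 𝕜] [LinearOrder 𝕜] [IsStrictOrderedRing 𝕜] [Fintype d]

theorem exists_nonneg_cons_vecMul_eq {k : ℕ}
    (ih : ∀ (V : Matrix (Fin k) d 𝕜) (b : d → 𝕜),
      (∀ z, V *ᵥ z ≤ 0 → b ⬝ᵥ z ≤ 0) → ∃ y, 0 ≤ y ∧ y ᵥ* V = b)
    (a : d → 𝕜) (V : Fin k → d → 𝕜) (b : d → 𝕜)
    (h : ∀ z, of (vecCons a V) *ᵥ z ≤ 0 → b ⬝ᵥ z ≤ 0) :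
    ∃ y, 0 ≤ y ∧ y ᵥ* of (vecCons a V) = b := by
  simp only [cons_mulVec_nonpos_iff] at h
  by_cases hV : ∀ z, of V *ᵥ z ≤ 0 → b ⬝ᵥ z ≤ 0
  · obtain ⟨y, hy, rfl⟩ := ih (of V) b hV
    exact ⟨vecCons 0 y, Fin.le_cons.2 ⟨le_rfl, hy⟩, by simp⟩
  push Not at hV
  obtain ⟨z₀, hVz₀, hbz₀⟩ := hV
  have haz₀ : 0 < a ⬝ᵥ z₀ := by
    by_contra! ha
    exact (h z₀ ⟨ha, hVz₀⟩).not_gt hbz₀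
  -- Rescale `z₀` so that `a ⬝ᵥ w = 1`, then eliminate `a` by projecting along `w`.
  set w := (a ⬝ᵥ z₀)⁻¹ • z₀
  have haw : a ⬝ᵥ w = 1 := by rw [dotProduct_smul, smul_eq_mul, inv_mul_cancel₀ haz₀.ne']
  have hVw : of V *ᵥ w ≤ 0 := by
    rw [mulVec_smul]
    exact smul_nonpos_of_nonneg_of_nonpos (by positivity) hVz₀
  have hbw : 0 < b ⬝ᵥ w := by
    rw [dotProduct_smul]
    exact smul_pos (by positivity) hbz₀
  obtain ⟨y, hy, hyV⟩ := ih (of V - vecMulVec (of V *ᵥ w) a) (b - (b ⬝ᵥ w) • a) fun z hz ↦ by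
    rw [sub_vecMulVec_mulVec] at hz
    rw [sub_smul_dotProduct]
    refine h _ ⟨?_, hz⟩
    rw [dotProduct_sub, dotProduct_smul, haw, smul_eq_mul, mul_one, sub_self]
  refine ⟨vecCons (b ⬝ᵥ w - y ⬝ᵥ (of V *ᵥ w)) y, Fin.le_cons.2 ⟨?_, hy⟩, ?_⟩
  · have hyVw : y ⬝ᵥ (of V *ᵥ w) ≤ 0 := by
      simpa using dotProduct_le_dotProduct_of_nonneg_left hVw hy
    exact sub_nonneg.2 (hyVw.trans hbw.le)
  · rw [vecMul_sub, vecMul_vecMulVec] at hyV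
    rw [cons_vecMul_cons, sub_smul]
    linear_combination (norm := module) hyV

theorem exists_nonneg_vecMul_eq_of_mulVec_nonpos_imp_fin {k : ℕ} (V : Matrix (Fin k) d 𝕜)
    (b : d → 𝕜) (h : ∀ z, V *ᵥ z ≤ 0 → b ⬝ᵥ z ≤ 0) : ∃ y, 0 ≤ y ∧ y ᵥ* V = b := by
  induction k generalizing b with
  | zero =>
    have hb : b ⬝ᵥ b ≤ 0 := h b fun i ↦ i.elim0
    refine ⟨0, le_rfl, ?_⟩
    rw [zero_vecMul, eq_comm, ← dotProduct_self_eq_zero]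
    exact le_antisymm hb (Finset.sum_nonneg fun i _ ↦ mul_self_nonneg (b i))
  | succ k ih =>
    rw [← Fin.cons_self_tail V] at h ⊢
    exact exists_nonneg_cons_vecMul_eq ih _ _ b h

theorem exists_nonneg_vecMul_eq_of_mulVec_nonpos_imp [Fintype ι] (V : Matrix ι d 𝕜)
    (b : d → 𝕜) (h : ∀ z, V *ᵥ z ≤ 0 → b ⬝ᵥ z ≤ 0) : ∃ y, 0 ≤ y ∧ y ᵥ* V = b := by
  let e := Fintype.equivFin ι
  obtain ⟨y, hy, hyV⟩ := exists_nonneg_vecMul_eq_of_mulVec_nonpos_imp_fin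
    (V.submatrix e.symm id) b fun z hz ↦ h z fun i ↦ by simpa [mulVec] using hz (e i)
  refine ⟨y ∘ e, fun i ↦ hy (e i), ?_⟩
  rw [← hyV, submatrix_vecMul_equiv]
  rfl

section Affine

variable {A : Matrix ι d 𝕜} {b : ι → 𝕜} {c : d → 𝕜} {δ : 𝕜}

theorem dotProduct_nonpos_of_mulVec_nonpos (hfeas : ∃ z, A *ᵥ z ≤ b)
    (h : ∀ z, A *ᵥ z ≤ b → c ⬝ᵥ z ≤ δ) {w : d → 𝕜} (hw : A *ᵥ w ≤ 0) : c ⬝ᵥ w ≤ 0 := by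
  obtain ⟨z₀, hz₀⟩ := hfeas
  have hray : ∀ r : 𝕜, 0 ≤ r → c ⬝ᵥ z₀ + r * (c ⬝ᵥ w) ≤ δ := fun r hr ↦ by
    have hfeas_r : A *ᵥ (z₀ + r • w) ≤ b := by
      rw [mulVec_add, mulVec_smul]
      simpa using add_le_add hz₀ (smul_nonpos_of_nonneg_of_nonpos hr hw)
    simpa [dotProduct_add, dotProduct_smul] using h _ hfeas_r
  by_contra! hcw
  have hgap : 0 ≤ δ - c ⬝ᵥ z₀ := sub_nonneg.2 (h z₀ hz₀)
  have := hray ((δ - c ⬝ᵥ z₀ + 1) / (c ⬝ᵥ w)) (by positivity)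
  rw [div_mul_cancel₀ _ hcw.ne'] at this
  linarith

theorem dotProduct_le_mul_of_mulVec_le_smul_s3 (hfeas : ∃ z, A *ᵥ z ≤ b)
    (h : ∀ z, A *ᵥ z ≤ b → c ⬝ᵥ z ≤ δ) {w : d → 𝕜} {t : 𝕜} (ht : 0 ≤ t)
    (hw : A *ᵥ w ≤ t • b) : c ⬝ᵥ w ≤ t * δ := by
  rcases ht.eq_or_lt with rfl | ht
  · rw [zero_smul] at hw
    simpa using dotProduct_nonpos_of_mulVec_nonpos hfeas h hw
  · have := h (t⁻¹ • w) (by rwa [mulVec_smul, inv_smul_le_iff_of_pos ht])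
    rwa [dotProduct_smul, inv_smul_le_iff_of_pos ht, smul_eq_mul] at this

theorem exists_nonneg_vecMul_eq_dotProduct_le [Fintype ι] (hfeas : ∃ z, A *ᵥ z ≤ b)
    (h : ∀ z, A *ᵥ z ≤ b → c ⬝ᵥ z ≤ δ) : ∃ y, 0 ≤ y ∧ y ᵥ* A = c ∧ y ⬝ᵥ b ≤ δ := by
  -- Homogeneous system in `x = (w, t)`: `A w - t b ≤ 0`, `-t ≤ 0` implies `c ⬝ᵥ w - t δ ≤ 0`.
  let G : Matrix (ι ⊕ Unit) (d ⊕ Unit) 𝕜 := fromBlocks A (-replicateCol Unit b) 0 (-1)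
  obtain ⟨y, hy, hyG⟩ := exists_nonneg_vecMul_eq_of_mulVec_nonpos_imp G (Sum.elim c fun _ ↦ -δ)
    fun x hx ↦ by
      have hw : A *ᵥ (x ∘ Sum.inl) ≤ x (Sum.inr ()) • b := fun i ↦ by
        simpa [G, fromBlocks_mulVec, neg_mulVec, mulVec, dotProduct, mul_comm] using hx (Sum.inl i)
      have ht : 0 ≤ x (Sum.inr ()) := by
        simpa [G, fromBlocks_mulVec, neg_mulVec] using hx (Sum.inr ())
      simpa [dotProduct, Fintype.sum_sum_type, mul_comm] using
        dotProduct_le_mul_of_mulVec_le_smul_s3 hfeas h ht hw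
  refine ⟨y ∘ Sum.inl, fun i ↦ hy (Sum.inl i), ?_, ?_⟩
  · ext j
    simpa [G, vecMul_fromBlocks] using congrFun hyG (Sum.inl j)
  · have hslack := congrFun hyG (Sum.inr ())
    simp only [G, vecMul, dotProduct, Fintype.sum_sum_type, fromBlocks_apply₁₂, neg_apply,
      replicateCol_apply, mul_neg, Finset.sum_neg_distrib, Finset.univ_unique,
      PUnit.default_eq_unit, fromBlocks_apply₂₂, one_apply_eq, mul_one, Finset.sum_singleton,
      Sum.elim_inr] at hslack
    have hs : 0 ≤ y (Sum.inr ()) := hy _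
    simp only [dotProduct, Function.comp_apply]
    linarith

end Affine

end Matrix

theorem exists_farkas_certificate_of_contractive_general {n m : ℕ}
    (T : Matrix (Fin m) (Fin n) ℝ) (M : Matrix (Fin n) (Fin n) ℝ)
    (lam : ℝ)
    (hcontr : ∀ z : Fin n → ℝ, T.mulVec z ≤ 1 → T.mulVec (M.mulVec z) ≤ lam • 1) :
    ∃ P : Matrix (Fin m) (Fin m) ℝ,
      (∀ i j, 0 ≤ P i j) ∧ P * T = T * M ∧ P.mulVec 1 ≤ lam • 1 := by
  have hrow : ∀ i, ∃ p : Fin m → ℝ, 0 ≤ p ∧ p ᵥ* T = (T * M) i ∧ p ⬝ᵥ 1 ≤ lam := fun i ↦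
    exists_nonneg_vecMul_eq_dotProduct_le ⟨0, by simp⟩ fun z hz ↦
      calc (T * M) i ⬝ᵥ z = (T *ᵥ M *ᵥ z) i := by rw [mulVec_mulVec]; rfl
        _ ≤ lam := by simpa using hcontr z hz i
  choose P hP_nonneg hPT hP_one using hrow
  exact ⟨P, hP_nonneg, funext hPT, fun i ↦ by simpa [mulVec] using hP_one i⟩

/-- Existence of a Farkas certificate for λ-contractiveness: if the linear map `M`
maps the set `Λ = {z : T z ≤ 𝟏}` into its `λ`-scaling, i.e. `T z ≤ 𝟏 → T M z ≤ λ𝟏`,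
then there is a nonnegative matrix `P` with `P T = T M` and `P 𝟏 ≤ λ 𝟏`. -/
theorem exists_farkas_certificate_of_contractive {n m : ℕ}
    (T : Matrix (Fin m) (Fin n) ℝ) (M : Matrix (Fin n) (Fin n) ℝ)
    (lam : ℝ) (hlam : 0 ≤ lam)
    (hcontr : ∀ z : Fin n → ℝ, T.mulVec z ≤ 1 → T.mulVec (M.mulVec z) ≤ lam • 1) :
    ∃ P : Matrix (Fin m) (Fin m) ℝ,
      (∀ i j, 0 ≤ P i j) ∧ P * T = T * M ∧ P.mulVec 1 ≤ lam • 1 :=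
  exists_farkas_certificate_of_contractive_general T M lam hcontr
end

section
/- Let T be a real m×n matrix, K a real p×n matrix, let (A_i, B_i) for i = 1,…,n_p be pairs of real n×n and n×p matrices, let w_l ∈ ℝⁿ for l = 1,…,n_w, let v ∈ ℝ^p, and let τ, τ' ∈ ℝ^m. Suppose for each i there exists a nonnegative real m×m matrix P_i with P_i T = T (A_i + B_i K), and that for all i and l one has P_i τ + T B_i v + T w_l ≤ τ'. Then for every z ∈ ℝⁿ with T z ≤ τ, every (A, B) in the convex hull of {(A_1,B_1),…,(A_{n_p},B_{n_p})}, and every w in the convex hull of {w_1,…,w_{n_w}}, one has T ((A + B K) z + B v + w) ≤ τ', i.e. the successor state lies in the tube {z : T z ≤ τ'}. -/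
/-!
Each vertex `(A i, B i, w l)` is handled by the Farkas certificate `P i`: since `P i` is
nonnegative and `P i * T = T * (A i + B i * K)`, from `T z ≤ τ` we get
`T (A i + B i K) z = P i (T z) ≤ P i τ`, and the hypothesis on `P i τ` closes the vertex case.
For fixed `z` the successor `T ((A + B K) z + B v + w)` is linear in the triple `((A, B), w)`,
so the sublevel set `{T (…) ≤ τ'}` is convex and contains the convex hull of the vertices,
which is the product of the two convex hulls.
-/

open Matrix

section Order

variable {R : Type*} [CommSemiring R] [PartialOrder R] [IsOrderedRing R]
  {l m n p : Type*} [Fintype m] [Fintype n] [Fintype p]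

theorem Matrix.mulVec_le_mulVec_of_nonneg {P : Matrix l m R} (hP : ∀ i j, 0 ≤ P i j)
    {x y : m → R} (hxy : x ≤ y) : P *ᵥ x ≤ P *ᵥ y :=
  fun i => dotProduct_le_dotProduct_of_nonneg_left hxy (hP i)

theorem Matrix.mulVec_mulVec_le_of_nonneg_of_mul_eq {T : Matrix m n R} {M : Matrix n n R}
    {P : Matrix m m R} (hP : ∀ i j, 0 ≤ P i j) (hPT : P * T = T * M)
    {z : n → R} {τ : m → R} (hz : T *ᵥ z ≤ τ) : T *ᵥ (M *ᵥ z) ≤ P *ᵥ τ := by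
  rw [mulVec_mulVec, ← hPT, ← mulVec_mulVec]
  exact mulVec_le_mulVec_of_nonneg hP hz

end Order

section ClosedLoop

variable {R : Type*} [CommSemiring R] {n p : Type*} [Fintype n] [Fintype p]

def closedLoopSuccessor (K : Matrix p n R) (z : n → R) (v : p → R) :
    (Matrix n n R × Matrix n p R) × (n → R) →ₗ[R] n → R where
  toFun q := (q.1.1 + q.1.2 * K) *ᵥ z + q.1.2 *ᵥ v + q.2
  map_add' q q' := by
    simp only [Prod.fst_add, Prod.snd_add, Matrix.add_mul, add_mulVec]
    abel
  map_smul' c q := by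
    simp only [Prod.smul_fst, Prod.smul_snd, smul_mul, ← smul_add, smul_mulVec, RingHom.id_apply]

variable [PartialOrder R] [IsOrderedRing R] {m : Type*} [Fintype m]

theorem mulVec_closedLoopSuccessor_le {T : Matrix m n R} {K : Matrix p n R}
    {A : Matrix n n R} {B : Matrix n p R} {P : Matrix m m R} {z w : n → R} {v : p → R}
    {τ τ' : m → R} (hP : ∀ i j, 0 ≤ P i j) (hPT : P * T = T * (A + B * K))
    (hτ' : P *ᵥ τ + T *ᵥ (B *ᵥ v) + T *ᵥ w ≤ τ') (hz : T *ᵥ z ≤ τ) :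
    T *ᵥ closedLoopSuccessor K z v ((A, B), w) ≤ τ' := by
  have hAB : T *ᵥ ((A + B * K) *ᵥ z) ≤ P *ᵥ τ := mulVec_mulVec_le_of_nonneg_of_mul_eq hP hPT hz
  refine le_trans ?_ hτ'
  simp only [closedLoopSuccessor, LinearMap.coe_mk, AddHom.coe_mk, mulVec_add]
  gcongr

end ClosedLoop

/-- Soundness of the one-step tube-propagation constraint for general complexity
tubes: given nonnegative Farkas certificates `P i` with `P i * T = T (A i + B i K)`
and `P i τ + T B i v + T w l ≤ τ'` for all vertices `i`, `l`, every successor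
`(A + B K) z + B v + w` of a point `z` of the tube `{z : T z ≤ τ}`, for `(A, B)`
in the convex hull of the vertex matrix pairs and `w` in the convex hull of the
disturbance vertices, lies in the tube `{z : T z ≤ τ'}`. -/
theorem tube_propagation_sound {n m p np nw : ℕ}
    (T : Matrix (Fin m) (Fin n) ℝ) (K : Matrix (Fin p) (Fin n) ℝ)
    (A : Fin np → Matrix (Fin n) (Fin n) ℝ) (B : Fin np → Matrix (Fin n) (Fin p) ℝ)
    (w : Fin nw → Fin n → ℝ) (v : Fin p → ℝ) (τ τ' : Fin m → ℝ)
    (P : Fin np → Matrix (Fin m) (Fin m) ℝ)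
    (hPnonneg : ∀ i, ∀ r s, 0 ≤ P i r s)
    (hPeq : ∀ i, P i * T = T * (A i + B i * K))
    (hPineq : ∀ i l, (P i).mulVec τ + T.mulVec ((B i).mulVec v) + T.mulVec (w l) ≤ τ') :
    ∀ z : Fin n → ℝ, T.mulVec z ≤ τ →
      ∀ AB ∈ convexHull ℝ (Set.range fun i => (A i, B i)),
        ∀ ww ∈ convexHull ℝ (Set.range w),
          T.mulVec ((AB.1 + AB.2 * K).mulVec z + AB.2.mulVec v + ww) ≤ τ' := by
  intro z hz AB hAB ww hww
  have hvertex : (Set.range fun i => (A i, B i)) ×ˢ Set.range w ⊆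
      (T.mulVecLin ∘ₗ closedLoopSuccessor K z v) ⁻¹' Set.Iic τ' := by
    rintro ⟨_, _⟩ ⟨⟨i, rfl⟩, l, rfl⟩
    exact mulVec_closedLoopSuccessor_le (hPnonneg i) (hPeq i) (hPineq i l) hz
  exact convexHull_min hvertex ((convex_Iic τ').linear_preimage _) (mk_mem_convexHull_prod hAB hww)
end

section
/- Let T be a real m×n matrix, K a real p×n matrix, let (A_i, B_i) for i = 1,…,n_p be pairs of real n×n and n×p matrices, let w_l ∈ ℝⁿ for l = 1,…,n_w, and let τ ∈ ℝ^m. Suppose for each i there exists a nonnegative real m×m matrix P_i with P_i T = T (A_i + B_i K), and that for all i and l one has P_i τ + T w_l ≤ τ. Then the set Z_f := {z ∈ ℝⁿ : T z ≤ τ} is robust positively invariant for the closed-loop dynamics: for every z ∈ Z_f, every (A, B) in the convex hull of {(A_1,B_1),…,(A_{n_p},B_{n_p})}, and every w in the convex hull of {w_1,…,w_{n_w}}, one has (A + B K) z + w ∈ Z_f. -/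
open Finset

lemma sum_mulVec' {α : Type*} [Fintype α] {m n : ℕ} (M : α → Matrix (Fin m) (Fin n) ℝ)
    (v : Fin n → ℝ) : (∑ j, M j).mulVec v = ∑ j, (M j).mulVec v := by
  ext r
  simp only [Matrix.mulVec, dotProduct, Matrix.sum_apply, Finset.sum_mul,
    Finset.sum_apply]
  rw [Finset.sum_comm]

lemma mulVec_sum' {α : Type*} [Fintype α] {m n : ℕ} (T : Matrix (Fin m) (Fin n) ℝ)
    (v : α → Fin n → ℝ) : T.mulVec (∑ j, v j) = ∑ j, T.mulVec (v j) := by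
  ext r
  simp only [Matrix.mulVec, dotProduct, Finset.sum_apply, Finset.mul_sum]
  rw [Finset.sum_comm]

/-- Robust positive invariance of the terminal set defined via Farkas certificates:
if nonnegative matrices `P i` satisfy `P i * T = T (A i + B i K)` and
`P i τ + T w l ≤ τ` for all vertices `i`, `l`, then the set
`Z_f = {z : T z ≤ τ}` is robust positively invariant for the closed loop
`z⁺ = (A + B K) z + w` with `(A, B)` in the convex hull of the vertex matrix
pairs and `w` in the convex hull of the disturbance vertices. -/
theorem terminal_set_RPI {n m p np nw : ℕ}
    (T : Matrix (Fin m) (Fin n) ℝ) (K : Matrix (Fin p) (Fin n) ℝ)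
    (A : Fin np → Matrix (Fin n) (Fin n) ℝ) (B : Fin np → Matrix (Fin n) (Fin p) ℝ)
    (w : Fin nw → Fin n → ℝ) (τ : Fin m → ℝ)
    (P : Fin np → Matrix (Fin m) (Fin m) ℝ)
    (hPnonneg : ∀ i, ∀ r s, 0 ≤ P i r s)
    (hPeq : ∀ i, P i * T = T * (A i + B i * K))
    (hPineq : ∀ i l, (P i).mulVec τ + T.mulVec (w l) ≤ τ) :
    ∀ z ∈ {z : Fin n → ℝ | T.mulVec z ≤ τ},
      ∀ AB ∈ convexHull ℝ (Set.range fun i => (A i, B i)),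
        ∀ ww ∈ convexHull ℝ (Set.range w),
          (AB.1 + AB.2 * K).mulVec z + ww ∈ {z : Fin n → ℝ | T.mulVec z ≤ τ} := by
  intro z hz AB hAB ww hww
  rw [mem_convexHull_iff_exists_fintype] at hAB hww
  obtain ⟨ι, _, c, F, hc0, hc1, hFmem, hF⟩ := hAB
  obtain ⟨κ, _, d, G, hd0, hd1, hGmem, hG⟩ := hww
  choose g hg using hFmem
  choose f hf using hGmem
  simp only [Set.mem_setOf_eq] at hz ⊢
  -- decompose the matrix
  have hA : AB.1 = ∑ j, c j • A (g j) := by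
    rw [← hF, Prod.fst_sum]
    exact Finset.sum_congr rfl fun j _ => by rw [← hg j]; rfl
  have hB : AB.2 = ∑ j, c j • B (g j) := by
    rw [← hF, Prod.snd_sum]
    exact Finset.sum_congr rfl fun j _ => by rw [← hg j]; rfl
  have hM : AB.1 + AB.2 * K = ∑ j, c j • (A (g j) + B (g j) * K) := by
    rw [hA, hB, Matrix.sum_mul, ← Finset.sum_add_distrib]
    exact Finset.sum_congr rfl fun j _ => by rw [smul_add, Matrix.smul_mul]
  have hww' : ww = ∑ k, d k • w (f k) := by
    rw [← hG]
    exact Finset.sum_congr rfl fun k _ => by rw [hf k]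
  -- rewrite T applied to the successor state
  have hTv : T.mulVec ((AB.1 + AB.2 * K).mulVec z + ww)
      = ∑ j, c j • (P (g j)).mulVec (T.mulVec z) + ∑ k, d k • T.mulVec (w (f k)) := by
    rw [Matrix.mulVec_add, hM, hww']
    congr 1
    · have h1 : (∑ j, c j • (A (g j) + B (g j) * K)) = ∑ j, (c j • (A (g j) + B (g j) * K)) := rfl
      rw [sum_mulVec' (fun j => c j • (A (g j) + B (g j) * K)) z, mulVec_sum']
      refine Finset.sum_congr rfl fun j _ => ?_
      rw [Matrix.smul_mulVec, Matrix.mulVec_smul, Matrix.mulVec_mulVec, ← hPeq,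
        ← Matrix.mulVec_mulVec]
    · rw [mulVec_sum']
      exact Finset.sum_congr rfl fun k _ => by rw [Matrix.mulVec_smul]
  rw [hTv]
  intro r
  simp only [Pi.add_apply, Finset.sum_apply, Pi.smul_apply, smul_eq_mul]
  have key : ∀ j, (P (g j)).mulVec (T.mulVec z) r ≤ (P (g j)).mulVec τ r := by
    intro j
    simp only [Matrix.mulVec, dotProduct]
    exact Finset.sum_le_sum fun s _ => mul_le_mul_of_nonneg_left (hz s) (hPnonneg (g j) r s)
  calc (∑ j, c j * (P (g j)).mulVec (T.mulVec z) r) + ∑ k, d k * T.mulVec (w (f k)) r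
      ≤ (∑ j, c j * (P (g j)).mulVec τ r) + ∑ k, d k * T.mulVec (w (f k)) r := by
        gcongr with j _
        · exact hc0 j
        · exact key j
    _ = ∑ j, ∑ k, c j * d k * ((P (g j)).mulVec τ r + T.mulVec (w (f k)) r) := by
        have e1 : (∑ j, c j * (P (g j)).mulVec τ r)
            = ∑ j, ∑ k, c j * d k * (P (g j)).mulVec τ r := by
          refine Finset.sum_congr rfl fun j _ => ?_
          rw [← Finset.sum_mul]
          rw [show (∑ k, c j * d k) = c j * ∑ k, d k by rw [Finset.mul_sum], hd1, mul_one]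
        have e2 : (∑ k, d k * T.mulVec (w (f k)) r)
            = ∑ j, ∑ k, c j * d k * T.mulVec (w (f k)) r := by
          rw [Finset.sum_comm]
          refine Finset.sum_congr rfl fun k _ => ?_
          rw [show (∑ j, c j * d k * T.mulVec (w (f k)) r)
              = (∑ j, c j) * (d k * T.mulVec (w (f k)) r) by
            rw [Finset.sum_mul]; exact Finset.sum_congr rfl fun j _ => by ring]
          rw [hc1, one_mul]
        rw [e1, e2, ← Finset.sum_add_distrib]
        exact Finset.sum_congr rfl fun j _ => by
          rw [← Finset.sum_add_distrib]
          exact Finset.sum_congr rfl fun k _ => by ring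
    _ ≤ ∑ j, ∑ k, c j * d k * τ r := by
        gcongr with j _ k _
        · exact mul_nonneg (hc0 j) (hd0 k)
        · exact hPineq (g j) (f k) r
    _ = τ r := by
        rw [show (∑ j, ∑ k, c j * d k * τ r) = (∑ j, c j) * ((∑ k, d k) * τ r) by
          rw [Finset.sum_mul]
          exact Finset.sum_congr rfl fun j _ => by
            rw [Finset.sum_mul, Finset.mul_sum]
            exact Finset.sum_congr rfl fun k _ => by ring]
        rw [hc1, hd1, one_mul, one_mul]
end

section
/- Let T be a real m×n matrix, K a real p×n matrix, let (A_i, B_i) for i = 1,…,n_p be pairs of real n×n and n×p matrices, let w_l ∈ ℝⁿ for l = 1,…,n_w, let v ∈ ℝ^p, let ẑ, ẑ' ∈ ℝⁿ and α, α' ∈ ℝ. Suppose for each i there exists a nonnegative real m×m matrix P_i with P_i T = T (A_i + B_i K), and that for all i and l one has P_i (α𝟏 + T ẑ) + T B_i v + T w_l ≤ T ẑ' + α'𝟏. Then for every z ∈ ℝⁿ with T (z − ẑ) ≤ α𝟏, every (A, B) in the convex hull of {(A_1,B_1),…,(A_{n_p},B_{n_p})}, and every w in the convex hull of {w_1,…,w_{n_w}},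 one has T ((A + B K) z + B v + w − ẑ') ≤ α'𝟏. -/
/-- Soundness of the one-step homothetic-tube propagation constraint: given
nonnegative Farkas certificates `P i` with `P i * T = T (A i + B i K)` and
`P i (α𝟏 + T ẑ) + T B i v + T w l ≤ T ẑ' + α'𝟏` for all vertices `i`, `l`, the
successor `(A + B K) z + B v + w` of every point `z` of the homothetic tube
`{z : T (z - ẑ) ≤ α𝟏}` lies in the homothetic tube `{z : T (z - ẑ') ≤ α'𝟏}`,
for `(A, B)` in the convex hull of the vertex matrix pairs and `w` in the
convex hull of the disturbance vertices. -/
theorem homothetic_tube_propagation_sound {n m p np nw : ℕ}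
    (T : Matrix (Fin m) (Fin n) ℝ) (K : Matrix (Fin p) (Fin n) ℝ)
    (A : Fin np → Matrix (Fin n) (Fin n) ℝ) (B : Fin np → Matrix (Fin n) (Fin p) ℝ)
    (w : Fin nw → Fin n → ℝ) (v : Fin p → ℝ)
    (zhat zhat' : Fin n → ℝ) (α α' : ℝ)
    (P : Fin np → Matrix (Fin m) (Fin m) ℝ)
    (hPnonneg : ∀ i, ∀ r s, 0 ≤ P i r s)
    (hPeq : ∀ i, P i * T = T * (A i + B i * K))
    (hPineq : ∀ i l, (P i).mulVec (α • 1 + T.mulVec zhat)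
        + T.mulVec ((B i).mulVec v) + T.mulVec (w l) ≤ T.mulVec zhat' + α' • 1) :
    ∀ z : Fin n → ℝ, T.mulVec (z - zhat) ≤ α • 1 →
      ∀ AB ∈ convexHull ℝ (Set.range fun i => (A i, B i)),
        ∀ ww ∈ convexHull ℝ (Set.range w),
          T.mulVec ((AB.1 + AB.2 * K).mulVec z + AB.2.mulVec v + ww - zhat') ≤ α' • 1 := by
  intro z hz AB hAB ww hww
  set c : Fin m → ℝ := T.mulVec zhat' + α' • 1 with hc
  -- the target convex set
  set C : Set ((Matrix (Fin n) (Fin n) ℝ × Matrix (Fin n) (Fin p) ℝ) × (Fin n → ℝ)) :=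
    {q | T.mulVec ((q.1.1 + q.1.2 * K).mulVec z + q.1.2.mulVec v + q.2) ≤ c} with hC
  have hTz : T.mulVec z ≤ α • 1 + T.mulVec zhat := by
    have h : T.mulVec z - T.mulVec zhat ≤ α • 1 := by
      rwa [← Matrix.mulVec_sub]
    intro j
    have := h j
    simp only [Pi.sub_apply, Pi.add_apply] at this ⊢
    linarith
  have key : ∀ i l, (((A i, B i) : Matrix (Fin n) (Fin n) ℝ × Matrix (Fin n) (Fin p) ℝ),
      w l) ∈ C := by
    intro i l
    have h1 : T.mulVec ((A i + B i * K).mulVec z) = (P i).mulVec (T.mulVec z) := by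
      rw [Matrix.mulVec_mulVec, Matrix.mulVec_mulVec, hPeq]
    have h2 : (P i).mulVec (T.mulVec z) ≤ (P i).mulVec (α • 1 + T.mulVec zhat) := by
      intro j
      simp only [Matrix.mulVec, dotProduct]
      exact Finset.sum_le_sum fun k _ =>
        mul_le_mul_of_nonneg_left (hTz k) (hPnonneg i j k)
    show T.mulVec ((A i + B i * K).mulVec z + (B i).mulVec v + w l) ≤ c
    calc T.mulVec ((A i + B i * K).mulVec z + (B i).mulVec v + w l)
        = T.mulVec ((A i + B i * K).mulVec z) + T.mulVec ((B i).mulVec v)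
          + T.mulVec (w l) := by
          rw [Matrix.mulVec_add, Matrix.mulVec_add]
      _ ≤ (P i).mulVec (α • 1 + T.mulVec zhat) + T.mulVec ((B i).mulVec v)
          + T.mulVec (w l) := by
          refine add_le_add (add_le_add ?_ le_rfl) le_rfl
          rw [h1]; exact h2
      _ ≤ c := hPineq i l
  have hconv : Convex ℝ C := by
    intro x hx y hy a b ha hb hab
    have hcomb : T.mulVec (((a • x + b • y).1.1 + (a • x + b • y).1.2 * K).mulVec z
        + (a • x + b • y).1.2.mulVec v + (a • x + b • y).2)
        = a • T.mulVec ((x.1.1 + x.1.2 * K).mulVec z + x.1.2.mulVec v + x.2)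
          + b • T.mulVec ((y.1.1 + y.1.2 * K).mulVec z + y.1.2.mulVec v + y.2) := by
      funext j
      simp only [Prod.fst_add, Prod.snd_add, Prod.smul_fst, Prod.smul_snd,
        Matrix.smul_mul, Matrix.add_mul, Matrix.add_mulVec, Matrix.smul_mulVec,
        Matrix.mulVec_add, Matrix.mulVec_smul, Pi.add_apply, Pi.smul_apply, smul_eq_mul]
      ring
    show _ ∈ C
    simp only [hC, Set.mem_setOf_eq] at hx hy ⊢
    rw [hcomb]
    intro j
    have h1 := hx j
    have h2 := hy j
    have e1 := mul_le_mul_of_nonneg_left h1 ha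
    have e2 := mul_le_mul_of_nonneg_left h2 hb
    have e3 : a * c j + b * c j = c j := by rw [← add_mul, hab, one_mul]
    simp only [Pi.add_apply, Pi.smul_apply, smul_eq_mul]
    linarith
  have hsub : (Set.range fun i => (A i, B i)) ×ˢ (Set.range w) ⊆ C := by
    rintro ⟨ab, u⟩ ⟨⟨i, hi⟩, ⟨l, hl⟩⟩
    cases hi; cases hl
    exact key i l
  have hmem : (AB, ww) ∈ convexHull ℝ ((Set.range fun i => (A i, B i)) ×ˢ (Set.range w)) := by
    rw [convexHull_prod]
    exact ⟨hAB, hww⟩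
  have hfin := convexHull_min hsub hconv hmem
  simp only [hC, Set.mem_setOf_eq] at hfin
  rw [show ((AB.1 + AB.2 * K).mulVec z + AB.2.mulVec v + ww - zhat')
      = ((AB.1 + AB.2 * K).mulVec z + AB.2.mulVec v + ww) - zhat' from rfl,
    Matrix.mulVec_sub]
  intro j
  have h := hfin j
  simp only [hc, Pi.add_apply, Pi.sub_apply] at h ⊢
  linarith
end

section
/- Let S ⊆ ℝⁿ be a convex set, K a real p×n matrix, (A_i, B_i) for i = 1,…,n_p pairs of real n×n and n×p matrices, W ⊆ ℝⁿ a set, and w_l ∈ ℝⁿ for l = 1,…,n_w. Suppose that for each i, every e ∈ S and every ŵ ∈ W satisfy (A_i + B_i K) e + ŵ ∈ S. Let z, x ∈ ℝⁿ with x − z ∈ S, let v ∈ ℝ^p, and set u := v + K (x − z). Then for every (A, B) in the convex hull of {(A_1,B_1),…,(A_{n_p},B_{n_p})}, every w̄ in the convex hull of {w_1,…,w_{n_w}}, and every ŵ ∈ W, the realized successor state A x + B u + w̄ + ŵ belongs to the Minkowski sum conv{A_i z + B_i v + w_l : 1 ≤ i ≤ n_p, 1 ≤ l ≤ n_w} ⊕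 S. -/
open Pointwise

private lemma sum_mulVec'_s10 {ι : Type*} {m k : ℕ} (s : Finset ι)
    (f : ι → Matrix (Fin m) (Fin k) ℝ) (x : Fin k → ℝ) :
    (∑ i ∈ s, f i).mulVec x = ∑ i ∈ s, (f i).mulVec x :=
  map_sum (AddMonoidHom.mk' (fun M : Matrix (Fin m) (Fin k) ℝ => M.mulVec x)
    (fun M N => Matrix.add_mulVec M N x)) f s

/-- One-step argument in the recursive feasibility proof: if the convex set `S` is
robust positively invariant for the vertex closed-loop matrices `A i + B i K` and
disturbances in `W`, `x - z ∈ S`, and the tube control law `u = v + K (x - z)` is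
applied, then the realized successor `A x + B u + w̄ + ŵ` lies in the Minkowski sum
of the convex hull of the predicted scenario-tree nodes `A i z + B i v + w l`
with `S`, for every `(A, B)` in the convex hull of the vertex pairs, `w̄` in the
convex hull of the disturbance vertices, and `ŵ ∈ W`. -/
theorem successor_in_nodes_hull_add_invariant_tube {n p np nw : ℕ}
    (S : Set (Fin n → ℝ)) (hS : Convex ℝ S)
    (K : Matrix (Fin p) (Fin n) ℝ)
    (A : Fin np → Matrix (Fin n) (Fin n) ℝ) (B : Fin np → Matrix (Fin n) (Fin p) ℝ)
    (W : Set (Fin n → ℝ)) (w : Fin nw → Fin n → ℝ)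
    (hinv : ∀ i, ∀ e ∈ S, ∀ what ∈ W, (A i + B i * K).mulVec e + what ∈ S)
    (z x : Fin n → ℝ) (hxz : x - z ∈ S) (v : Fin p → ℝ)
    (u : Fin p → ℝ) (hu : u = v + K.mulVec (x - z)) :
    ∀ AB ∈ convexHull ℝ (Set.range fun i => (A i, B i)),
      ∀ wbar ∈ convexHull ℝ (Set.range w),
        ∀ what ∈ W,
          AB.1.mulVec x + AB.2.mulVec u + wbar + what
            ∈ convexHull ℝ
                (Set.range fun il : Fin np × Fin nw =>
                  (A il.1).mulVec z + (B il.1).mulVec v + w il.2) + S := by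
  intro AB hAB wbar hwbar what hwhat
  rw [convexHull_range_eq_exists_affineCombination] at hAB hwbar
  obtain ⟨s, lam, hlam0, hlam1, hABeq⟩ := hAB
  obtain ⟨t, mu, hmu0, hmu1, hweq⟩ := hwbar
  rw [Finset.affineCombination_eq_linear_combination _ _ _ hlam1] at hABeq
  rw [Finset.affineCombination_eq_linear_combination _ _ _ hmu1] at hweq
  have hA1 : AB.1 = ∑ i ∈ s, lam i • A i := by
    rw [← hABeq, Prod.fst_sum]
    simp
  have hA2 : AB.2 = ∑ i ∈ s, lam i • B i := by
    rw [← hABeq, Prod.snd_sum]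
    simp
  -- the tube element
  set e : Fin n → ℝ := ∑ i ∈ s, lam i • ((A i + B i * K).mulVec (x - z) + what) with he
  have heS : e ∈ S :=
    hS.sum_mem hlam0 hlam1 (fun i _ => hinv i _ hxz what hwhat)
  -- the node element
  set node : Fin n → ℝ :=
    ∑ q ∈ s ×ˢ t, (lam q.1 * mu q.2) • ((A q.1).mulVec z + (B q.1).mulVec v + w q.2)
    with hnodedef
  have hnode : node ∈ convexHull ℝ
      (Set.range fun il : Fin np × Fin nw =>
        (A il.1).mulVec z + (B il.1).mulVec v + w il.2) := by
    refine (convex_convexHull ℝ _).sum_mem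
      (fun q hq => mul_nonneg (hlam0 _ (Finset.mem_product.1 hq).1)
        (hmu0 _ (Finset.mem_product.1 hq).2)) ?_
      (fun q _ => subset_convexHull ℝ _ ⟨q, rfl⟩)
    rw [Finset.sum_product]
    simp only [← Finset.mul_sum, hmu1, mul_one, hlam1]
  have hnode_eq : node = ∑ i ∈ s, lam i • ((A i).mulVec z + (B i).mulVec v + wbar) := by
    rw [hnodedef, Finset.sum_product]
    refine Finset.sum_congr rfl fun i _ => ?_
    calc ∑ j ∈ t, (lam i * mu j) • ((A i).mulVec z + (B i).mulVec v + w j)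
        = ∑ j ∈ t, (lam i • (mu j • ((A i).mulVec z + (B i).mulVec v))
            + lam i • (mu j • w j)) := by
          refine Finset.sum_congr rfl fun j _ => ?_
          rw [mul_smul, ← smul_add, smul_add]
      _ = lam i • ((∑ j ∈ t, mu j) • ((A i).mulVec z + (B i).mulVec v))
            + lam i • (∑ j ∈ t, mu j • w j) := by
          rw [Finset.sum_add_distrib, ← Finset.smul_sum, ← Finset.smul_sum, Finset.sum_smul]
      _ = lam i • ((A i).mulVec z + (B i).mulVec v + wbar) := by
          rw [hmu1, one_smul, hweq, ← smul_add]
  have key : AB.1.mulVec x + AB.2.mulVec u + wbar + what = node + e := by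
    rw [hnode_eq, he, ← Finset.sum_add_distrib]
    have hterm : ∀ i ∈ s, lam i • ((A i).mulVec z + (B i).mulVec v + wbar) +
        lam i • ((A i + B i * K).mulVec (x - z) + what)
        = lam i • ((A i).mulVec x + (B i).mulVec u + wbar + what) := by
      intro i _
      rw [← smul_add]
      congr 1
      have hzx : z + (x - z) = x := by abel
      have hx' : (A i).mulVec x = (A i).mulVec z + (A i).mulVec (x - z) := by
        rw [← Matrix.mulVec_add, hzx]
      have hu' : (B i).mulVec u = (B i).mulVec v + (B i * K).mulVec (x - z) := by
        rw [hu, Matrix.mulVec_add, Matrix.mulVec_mulVec]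
      rw [hx', hu', Matrix.add_mulVec]
      abel
    rw [Finset.sum_congr rfl hterm]
    simp only [smul_add, Finset.sum_add_distrib, ← Finset.sum_smul, hlam1, one_smul,
      hA1, hA2, sum_mulVec'_s10, Matrix.smul_mulVec]
  rw [key]
  exact Set.add_mem_add hnode heS
end
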